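/- For every θ ∈ Θ and every seed set S ⊆ V, the expected number of influenced nodes satisfies E_θ[R(c̃, S)] ≥ |S| + Σ_{i ∈ V \ S} π*_i. -/

import Mathlib

open scoped BigOperators

namespace CorrIM

variable {V : Type*} [Fintype V] [DecidableEq V]

/-- A node `i` is influenced: `i ∈ S`, or `i` is reachable from some node of `S`
along the live edges of the scenario `c`. -/
def influenced (c : Finset (V × V)) (S : Finset V) (i : V) : Prop :=
  ∃ s ∈ S, Relation.ReflTransGen (fun a b : V => (a, b) ∈ c) s i

/-- `R c S` : the number of influenced nodes in scenario `c` with seed set `S`. -/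
noncomputable def R (c : Finset (V × V)) (S : Finset V) : ℕ :=
  Set.ncard {i : V | influenced c S i}

/-- The Fréchet class `Θ` : probability distributions on scenarios (subsets of `E`)
whose marginals agree with the edge likelihoods `p`. -/
def memTheta (E : Finset (V × V)) (p : V × V → ℝ) (θ : Finset (V × V) → ℝ) : Prop :=
  (∀ c, 0 ≤ θ c) ∧ (∀ c, θ c ≠ 0 → c ⊆ E) ∧ (∑ c : Finset (V × V), θ c) = 1 ∧
    ∀ e ∈ E, (∑ c : Finset (V × V), if e ∈ c then θ c else 0) = p e

/-- Expected number of influenced nodes under the distribution `θ`. -/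
noncomputable def expInf (θ : Finset (V × V) → ℝ) (S : Finset V) : ℝ :=
  ∑ c : Finset (V × V), θ c * (R c S : ℝ)

/-- The correlation robust influence function `f^corr`. -/
noncomputable def fcorr (E : Finset (V × V)) (p : V × V → ℝ) (S : Finset V) : ℝ :=
  sInf {x : ℝ | ∃ θ, memTheta E p θ ∧ x = expInf θ S}

open Classical in
/-- Probability of the event `A` under the distribution `θ`. -/
noncomputable def prob (θ : Finset (V × V) → ℝ) (A : Finset (V × V) → Prop) : ℝ :=
  ∑ c : Finset (V × V), if A c then θ c else 0

/-- `γ` (a list of nodes `i₀, i₁, …, i_λ`, `λ ≥ 1`) is a directed path from the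
seed set `S` to the node `i` using edges of `E`. -/
def IsPathFrom (E : Finset (V × V)) (S : Finset V) (i : V) (γ : List V) : Prop :=
  2 ≤ γ.length ∧ (∃ s ∈ S, γ.head? = some s) ∧ γ.getLast? = some i ∧
    γ.Chain' (fun a b : V => (a, b) ∈ E)

/-- The list of edges `(i₀,i₁), …, (i_{λ-1}, i_λ)` of a path `γ = [i₀, …, i_λ]`. -/
def pathEdges (γ : List V) : List (V × V) := γ.zip γ.tail

/-- The weight `L(γ) = 1 - ∑_{l=1}^{λ} (1 - p(i_{l-1}, i_l))` of a path. -/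
noncomputable def L (p : V × V → ℝ) (γ : List V) : ℝ :=
  1 - ((pathEdges γ).map (fun e => 1 - p e)).sum

/-- `π*_i = max(0, max_{γ ∈ Γ(S,i)} L(γ))`, with value `0` when `Γ(S,i) = ∅`. -/
noncomputable def piStar (E : Finset (V × V)) (p : V × V → ℝ) (S : Finset V) (i : V) : ℝ :=
  sSup (insert 0 {x : ℝ | ∃ γ : List V, IsPathFrom E S i γ ∧ x = L p γ})

/-- The independent cascade distribution `θ_ic` : each edge of `E` is live
independently with probability `p e`. -/
noncomputable def thetaIC (E : Finset (V × V)) (p : V × V → ℝ) (c : Finset (V × V)) : ℝ :=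
  if c ⊆ E then (∏ e ∈ c, p e) * ∏ e ∈ E \ c, (1 - p e) else 0

/-- The independent cascade influence function `f^ic`. -/
noncomputable def fic (E : Finset (V × V)) (p : V × V → ℝ) (S : Finset V) : ℝ :=
  expInf (thetaIC E p) S

/-!
Expanding `R(c, S)` as a sum of indicators gives `E_θ[R(c̃, S)] = ∑ᵢ P_θ(i influenced)`.
Seeds are influenced in every scenario. A node `i ∉ S` is influenced whenever every edge of
some path `γ` from `S` to `i` is live, and the union bound over the dead edges shows that this
event has probability at least `1 - ∑_{e ∈ γ} (1 - p e) = L(γ)`, whatever the correlation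
between the edges.
-/

omit [Fintype V] [DecidableEq V] in
theorem isChain_iff_forall_mem_pathEdges {r : V → V → Prop} {γ : List V} :
    γ.IsChain r ↔ ∀ e ∈ pathEdges γ, r e.1 e.2 := by
  induction γ using List.twoStepInduction <;> simp_all [pathEdges]

omit [Fintype V] [DecidableEq V] in
theorem IsPathFrom.mem_of_mem_pathEdges {E : Finset (V × V)} {S : Finset V} {i : V}
    {γ : List V} (hγ : IsPathFrom E S i γ) {e : V × V} (he : e ∈ pathEdges γ) : e ∈ E :=
  isChain_iff_forall_mem_pathEdges.1 hγ.2.2.2 e he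

omit [Fintype V] [DecidableEq V] in
theorem IsPathFrom.influenced {E c : Finset (V × V)} {S : Finset V} {i : V} {γ : List V}
    (hγ : IsPathFrom E S i γ) (hlive : ∀ e ∈ pathEdges γ, e ∈ c) : influenced c S i := by
  obtain ⟨-, ⟨s, hs, hhead⟩, hlast, -⟩ := hγ
  have hne : γ ≠ [] := by rintro rfl; simp at hhead
  refine ⟨s, hs, ?_⟩
  have := List.relationReflTransGen_of_exists_isChain γ
    (isChain_iff_forall_mem_pathEdges (r := fun a b => (a, b) ∈ c) |>.2 hlive) hne
  rwa [(List.head_eq_iff_head?_eq_some hne).2 hhead,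
    (List.getLast_eq_iff_getLast?_eq_some hne).2 hlast] at this

section prob

variable {θ : Finset (V × V) → ℝ}

omit [DecidableEq V]

theorem prob_nonneg (hθ : ∀ c, 0 ≤ θ c) (A : Finset (V × V) → Prop) : 0 ≤ prob θ A :=
  Finset.sum_nonneg fun c _ => by split_ifs <;> simp [hθ c]

theorem prob_mono (hθ : ∀ c, 0 ≤ θ c) {A B : Finset (V × V) → Prop} (h : ∀ c, A c → B c) :
    prob θ A ≤ prob θ B :=
  Finset.sum_le_sum fun c _ => by
    by_cases hA : A c <;> by_cases hB : B c <;> simp_all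

theorem prob_of_forall {A : Finset (V × V) → Prop} (h : ∀ c, A c) :
    prob θ A = ∑ c, θ c := by
  simp [prob, h]

theorem prob_add_prob_le_prob_and_add_sum (hθ : ∀ c, 0 ≤ θ c) (A B : Finset (V × V) → Prop) :
    prob θ A + prob θ B ≤ prob θ (fun c => A c ∧ B c) + ∑ c, θ c := by
  simp only [prob, ← Finset.sum_add_distrib]
  refine Finset.sum_le_sum fun c _ => ?_
  by_cases hA : A c <;> by_cases hB : B c <;> simp [hA, hB, hθ c]

theorem one_sub_sum_le_prob_forall_mem {ι : Type*} (hθ : ∀ c, 0 ≤ θ c)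
    (hθ₁ : ∑ c, θ c = 1) (A : ι → Finset (V × V) → Prop) (l : List ι) :
    1 - (l.map fun x => 1 - prob θ (A x)).sum ≤ prob θ (fun c => ∀ x ∈ l, A x c) := by
  induction l with
  | nil => simp [prob_of_forall, hθ₁]
  | cons x l ih =>
    have hand := prob_add_prob_le_prob_and_add_sum hθ (A x) (fun c => ∀ y ∈ l, A y c)
    simp only [List.map_cons, List.sum_cons, List.forall_mem_cons]
    linarith

end prob

theorem memTheta.prob_mem {E : Finset (V × V)} {p : V × V → ℝ} {θ : Finset (V × V) → ℝ}
    (hθ : memTheta E p θ) {e : V × V} (he : e ∈ E) : prob θ (fun c => e ∈ c) = p e := by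
  rw [← hθ.2.2.2 e he, prob]
  convert rfl

theorem L_le_prob_influenced {E : Finset (V × V)} {p : V × V → ℝ} {θ : Finset (V × V) → ℝ}
    (hθ : memTheta E p θ) {S : Finset V} {i : V} {γ : List V} (hγ : IsPathFrom E S i γ) :
    L p γ ≤ prob θ (fun c => influenced c S i) := by
  have hL : L p γ = 1 - ((pathEdges γ).map fun e => 1 - prob θ (fun c => e ∈ c)).sum := by
    rw [L]
    congr 2
    exact List.map_congr_left fun e he => by rw [hθ.prob_mem (hγ.mem_of_mem_pathEdges he)]
  calc L p γ ≤ prob θ (fun c => ∀ e ∈ pathEdges γ, e ∈ c) :=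
        hL ▸ one_sub_sum_le_prob_forall_mem hθ.1 hθ.2.2.1 (fun e c => e ∈ c) _
    _ ≤ prob θ (fun c => influenced c S i) := prob_mono hθ.1 fun _ => hγ.influenced

theorem piStar_le_prob_influenced {E : Finset (V × V)} {p : V × V → ℝ}
    {θ : Finset (V × V) → ℝ} (hθ : memTheta E p θ) (S : Finset V) (i : V) :
    piStar E p S i ≤ prob θ (fun c => influenced c S i) := by
  refine Real.sSup_le ?_ (prob_nonneg hθ.1 _)
  rintro x (rfl | ⟨γ, hγ, rfl⟩)
  exacts [prob_nonneg hθ.1 _, L_le_prob_influenced hθ hγ]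

omit [DecidableEq V] in
theorem expInf_eq_sum_prob_influenced (θ : Finset (V × V) → ℝ) (S : Finset V) :
    expInf θ S = ∑ i, prob θ (fun c => influenced c S i) := by
  classical
  simp only [expInf, prob, R, Set.ncard_eq_toFinset_card', Set.toFinset_ofPred,
    Finset.card_filter, Nat.cast_sum, Finset.mul_sum]
  rw [Finset.sum_comm]
  refine Finset.sum_congr rfl fun i _ => Finset.sum_congr rfl fun c _ => ?_
  split_ifs <;> simp

theorem expInf_ge_card_add_sum_piStar_general (E : Finset (V × V)) (p : V × V → ℝ)
    (θ : Finset (V × V) → ℝ) (hθ : memTheta E p θ) (S : Finset V) :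
    (S.card : ℝ) + ∑ i ∈ Finset.univ \ S, piStar E p S i ≤ expInf θ S := by
  have hseeds : ∑ i ∈ S, prob θ (fun c => influenced c S i) = S.card := by
    have hi : ∀ i ∈ S, prob θ (fun c => influenced c S i) = 1 := fun i hi =>
      (prob_of_forall fun _ => ⟨i, hi, .refl⟩).trans hθ.2.2.1
    simp [Finset.sum_congr rfl hi]
  rw [expInf_eq_sum_prob_influenced, ← Finset.sum_sdiff (Finset.subset_univ S), hseeds,
    add_comm]
  gcongr with i
  exact piStar_le_prob_influenced hθ S i

/-- for every `θ ∈ Θ` and every seed set `S`,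
`E_θ[R(c̃, S)] ≥ |S| + ∑_{i ∈ V \ S} π*_i`. -/
theorem expInf_ge_card_add_sum_piStar (E : Finset (V × V)) (p : V × V → ℝ)
    (hp : ∀ e ∈ E, 0 ≤ p e ∧ p e ≤ 1)
    (θ : Finset (V × V) → ℝ) (hθ : memTheta E p θ) (S : Finset V) :
    (S.card : ℝ) + ∑ i ∈ Finset.univ \ S, piStar E p S i ≤ expInf θ S :=
  expInf_ge_card_add_sum_piStar_general E p θ hθ S

end CorrIM
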